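/- In the braid group B_{2n} (n ≥ 3), with r_2 = σ_4 σ_3 σ_2 σ_1 σ_5^{-1} σ_4^{-1} σ_3^{-1} σ_2^{-1}, s_1 = σ_2 σ_1 σ_3 σ_2 and s_2 = σ_4 σ_3 σ_5 σ_4, the relation r_2 s_2 r_2^{-1} = s_1 holds. -/

import Mathlib

/-- The braid relations on `m` generators `σ_1, …, σ_m` (indexed by `Fin m`):
`σᵢσⱼ = σⱼσᵢ` for `|i−j| > 1` and `σᵢσⱼσᵢ = σⱼσᵢσⱼ` for `|i−j| = 1`. -/
def braidRels (m : ℕ) : Set (FreeGroup (Fin m)) :=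
  { w | (∃ i j : Fin m, (i : ℕ) + 1 < (j : ℕ) ∧
          w = FreeGroup.of i * FreeGroup.of j * (FreeGroup.of i)⁻¹ * (FreeGroup.of j)⁻¹) ∨
        (∃ i j : Fin m, (i : ℕ) + 1 = (j : ℕ) ∧
          w = FreeGroup.of i * FreeGroup.of j * FreeGroup.of i *
              (FreeGroup.of j * FreeGroup.of i * FreeGroup.of j)⁻¹) }

/-- The braid group on `m + 1` strands, with generators `σ_1, …, σ_m`. -/
def BraidGroup (m : ℕ) : Type := PresentedGroup (braidRels m)

instance (m : ℕ) : Group (BraidGroup m) :=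
  inferInstanceAs (Group (PresentedGroup (braidRels m)))

/-- The standard Artin generator `σ_k` (for `1 ≤ k ≤ m`). -/
def bσ {m : ℕ} (k : ℕ) : BraidGroup m :=
  if h : k - 1 < m then PresentedGroup.of (⟨k - 1, h⟩ : Fin m) else 1

/-- `sᵢ = σ_{2i} σ_{2i−1} σ_{2i+1} σ_{2i}`. -/
def bs {m : ℕ} (i : ℕ) : BraidGroup m := bσ (2*i) * bσ (2*i - 1) * bσ (2*i + 1) * bσ (2*i)

/-- `tᵢ = σ_{2i−1}`. -/
def bt {m : ℕ} (i : ℕ) : BraidGroup m := bσ (2*i - 1)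

/-- `pᵢ = σ_{2i} σ_{2i−1} σ_{2i+1}⁻¹ σ_{2i}⁻¹`. -/
def bp {m : ℕ} (i : ℕ) : BraidGroup m := bσ (2*i) * bσ (2*i - 1) * (bσ (2*i + 1))⁻¹ * (bσ (2*i))⁻¹

/-- `r₁ = σ₂ σ₁ σ₃⁻¹ σ₂⁻¹`. -/
def br1 {m : ℕ} : BraidGroup m := bσ 2 * bσ 1 * (bσ 3)⁻¹ * (bσ 2)⁻¹

/-- `r₂ = σ₄ σ₃ σ₂ σ₁ σ₅⁻¹ σ₄⁻¹ σ₃⁻¹ σ₂⁻¹`. -/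
def br2 {m : ℕ} : BraidGroup m :=
  bσ 4 * bσ 3 * bσ 2 * bσ 1 * (bσ 5)⁻¹ * (bσ 4)⁻¹ * (bσ 3)⁻¹ * (bσ 2)⁻¹

lemma braid_rel_one {m : ℕ} {r : FreeGroup (Fin m)} (h : r ∈ braidRels m) :
    (PresentedGroup.mk (braidRels m) r : BraidGroup m) = 1 :=
  (QuotientGroup.eq_one_iff _).mpr (Subgroup.subset_normalClosure h)

lemma braid_braid {m : ℕ} {i j : Fin m} (h : (i : ℕ) + 1 = (j : ℕ)) :
    (PresentedGroup.of i : BraidGroup m) * PresentedGroup.of j * PresentedGroup.of i =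
      PresentedGroup.of j * PresentedGroup.of i * PresentedGroup.of j := by
  have := braid_rel_one (m := m)
    (r := FreeGroup.of i * FreeGroup.of j * FreeGroup.of i *
      (FreeGroup.of j * FreeGroup.of i * FreeGroup.of j)⁻¹) (Or.inr ⟨i, j, h, rfl⟩)
  simp only [map_mul, map_inv] at this
  have h2 := mul_inv_eq_one.mp this
  exact h2

lemma braid_comm {m : ℕ} {i j : Fin m} (h : (i : ℕ) + 1 < (j : ℕ)) :
    (PresentedGroup.of i : BraidGroup m) * PresentedGroup.of j =
      PresentedGroup.of j * PresentedGroup.of i := by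
  have := braid_rel_one (m := m)
    (r := FreeGroup.of i * FreeGroup.of j * (FreeGroup.of i)⁻¹ * (FreeGroup.of j)⁻¹)
    (Or.inl ⟨i, j, h, rfl⟩)
  simp only [map_mul, map_inv] at this
  have h2 : (PresentedGroup.of i : BraidGroup m) * PresentedGroup.of j *
      ((PresentedGroup.of j : BraidGroup m) * PresentedGroup.of i)⁻¹ = 1 := by
    rw [mul_inv_rev]; group; group at this; exact this
  exact mul_inv_eq_one.mp h2

lemma bσ_braid {m : ℕ} {k : ℕ} (h1 : 1 ≤ k) (h2 : k + 1 ≤ m) :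
    (bσ k : BraidGroup m) * bσ (k+1) * bσ k = bσ (k+1) * bσ k * bσ (k+1) := by
  unfold bσ
  erw [dif_pos (show k - 1 < m by omega), dif_pos (show k + 1 - 1 < m by omega)]
  exact braid_braid (by simp; omega)

lemma bσ_comm {m : ℕ} {i j : ℕ} (h1 : 1 ≤ i) (h : i + 1 < j) (h2 : j ≤ m) :
    (bσ i : BraidGroup m) * bσ j = bσ j * bσ i := by
  unfold bσ
  erw [dif_pos (show i - 1 < m by omega), dif_pos (show j - 1 < m by omega)]
  exact braid_comm (by simp; omega)

set_option maxHeartbeats 1600000 in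
theorem stmt9 (n : ℕ) (hn : 3 ≤ n) :
    (br2 : BraidGroup (2 * n - 1)) * bs 2 * br2⁻¹ = bs 1 := by
  have hm : 5 ≤ 2 * n - 1 := by omega
  set a : BraidGroup (2 * n - 1) := bσ 1 with ha
  set b : BraidGroup (2 * n - 1) := bσ 2 with hb
  set c : BraidGroup (2 * n - 1) := bσ 3 with hc
  set d : BraidGroup (2 * n - 1) := bσ 4 with hd
  set e : BraidGroup (2 * n - 1) := bσ 5 with he
  have Bab : a * b * a = b * a * b := bσ_braid (by omega) (by omega)
  have Bbc : b * c * b = c * b * c := bσ_braid (by omega) (by omega)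
  have Bcd : c * d * c = d * c * d := bσ_braid (by omega) (by omega)
  have Bde : d * e * d = e * d * e := bσ_braid (by omega) (by omega)
  have Cac : a * c = c * a := bσ_comm (by omega) (by omega) (by omega)
  have Cad : a * d = d * a := bσ_comm (by omega) (by omega) (by omega)
  have Cae : a * e = e * a := bσ_comm (by omega) (by omega) (by omega)
  have Cbd : b * d = d * b := bσ_comm (by omega) (by omega) (by omega)
  have Cbe : b * e = e * b := bσ_comm (by omega) (by omega) (by omega)
  have Cce : c * e = e * c := bσ_comm (by omega) (by omega) (by omega)
  have hbr2 : (br2 : BraidGroup (2 * n - 1)) =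
      (d * (c * (b * a))) * (b * (c * (d * e)))⁻¹ := by
    rw [br2, ← ha, ← hb, ← hc, ← hd, ← he]; group
  have hbs2 : (bs 2 : BraidGroup (2 * n - 1)) = d * (c * (e * d)) := by
    rw [bs]; norm_num
    show d * c * e * d = d * (c * (e * d)); group
  have hbs1 : (bs 1 : BraidGroup (2 * n - 1)) = b * (a * (c * b)) := by
    rw [bs]; norm_num
    show b * a * c * b = b * (a * (c * b)); group
  clear_value a b c d e
  have Bab' : ∀ t, a * (b * (a * t)) = b * (a * (b * t)) := fun t => by
    rw [← mul_assoc, ← mul_assoc, Bab, mul_assoc, mul_assoc]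
  have Bbc' : ∀ t, b * (c * (b * t)) = c * (b * (c * t)) := fun t => by
    rw [← mul_assoc, ← mul_assoc, Bbc, mul_assoc, mul_assoc]
  have Bcd' : ∀ t, c * (d * (c * t)) = d * (c * (d * t)) := fun t => by
    rw [← mul_assoc, ← mul_assoc, Bcd, mul_assoc, mul_assoc]
  have Bde' : ∀ t, d * (e * (d * t)) = e * (d * (e * t)) := fun t => by
    rw [← mul_assoc, ← mul_assoc, Bde, mul_assoc, mul_assoc]
  have Cac' : ∀ t, a * (c * t) = c * (a * t) := fun t => by
    rw [← mul_assoc, Cac, mul_assoc]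
  have Cad' : ∀ t, a * (d * t) = d * (a * t) := fun t => by
    rw [← mul_assoc, Cad, mul_assoc]
  have Cae' : ∀ t, a * (e * t) = e * (a * t) := fun t => by
    rw [← mul_assoc, Cae, mul_assoc]
  have Cbd' : ∀ t, b * (d * t) = d * (b * t) := fun t => by
    rw [← mul_assoc, Cbd, mul_assoc]
  have Cbe' : ∀ t, b * (e * t) = e * (b * t) := fun t => by
    rw [← mul_assoc, Cbe, mul_assoc]
  have Cce' : ∀ t, c * (e * t) = e * (c * t) := fun t => by
    rw [← mul_assoc, Cce, mul_assoc]
  have BabE : a * (b * a) = b * (a * b) := by rw [← mul_assoc, ← mul_assoc, Bab]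
  have BbcE : b * (c * b) = c * (b * c) := by rw [← mul_assoc, ← mul_assoc, Bbc]
  have BcdE : c * (d * c) = d * (c * d) := by rw [← mul_assoc, ← mul_assoc, Bcd]
  have BdeE : d * (e * d) = e * (d * e) := by rw [← mul_assoc, ← mul_assoc, Bde]
  have Hw : d * (c * (b * (a * (c * (b * (d * c)))))) = b * (a * (c * (b * (d * (c * (b * a)))))) := by
    calc d * (c * (b * (a * (c * (b * (d * c))))))
      _ = d * (c * (b * (c * (a * (b * (d * c)))))) := congrArg (fun z => d * z) (congrArg (fun z => c * z) (congrArg (fun z => b * z) (Cac' _)))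
      _ = d * (b * (c * (b * (a * (b * (d * c)))))) := congrArg (fun z => d * z) ((Bbc' _).symm)
      _ = b * (d * (c * (b * (a * (b * (d * c)))))) := (Cbd' _).symm
      _ = b * (d * (c * (a * (b * (a * (d * c)))))) := congrArg (fun z => b * z) (congrArg (fun z => d * z) (congrArg (fun z => c * z) ((Bab' _).symm)))
      _ = b * (d * (a * (c * (b * (a * (d * c)))))) := congrArg (fun z => b * z) (congrArg (fun z => d * z) ((Cac' _).symm))
      _ = b * (a * (d * (c * (b * (a * (d * c)))))) := congrArg (fun z => b * z) ((Cad' _).symm)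
      _ = b * (a * (d * (c * (b * (d * (a * c)))))) := congrArg (fun z => b * z) (congrArg (fun z => a * z) (congrArg (fun z => d * z) (congrArg (fun z => c * z) (congrArg (fun z => b * z) (Cad' _)))))
      _ = b * (a * (d * (c * (d * (b * (a * c)))))) := congrArg (fun z => b * z) (congrArg (fun z => a * z) (congrArg (fun z => d * z) (congrArg (fun z => c * z) (Cbd' _))))
      _ = b * (a * (d * (c * (d * (b * (c * a)))))) := congrArg (fun z => b * z) (congrArg (fun z => a * z) (congrArg (fun z => d * z) (congrArg (fun z => c * z) (congrArg (fun z => d * z) (congrArg (fun z => b * z) (Cac))))))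
      _ = b * (a * (c * (d * (c * (b * (c * a)))))) := congrArg (fun z => b * z) (congrArg (fun z => a * z) ((Bcd' _).symm))
      _ = b * (a * (c * (d * (b * (c * (b * a)))))) := congrArg (fun z => b * z) (congrArg (fun z => a * z) (congrArg (fun z => c * z) (congrArg (fun z => d * z) ((Bbc' _).symm))))
      _ = b * (a * (c * (b * (d * (c * (b * a)))))) := congrArg (fun z => b * z) (congrArg (fun z => a * z) (congrArg (fun z => c * z) ((Cbd' _).symm)))
  have Hv : b * (c * (d * (e * (c * (b * (d * c)))))) = d * (c * (e * (d * (b * (c * (d * e)))))) := by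
    calc b * (c * (d * (e * (c * (b * (d * c))))))
      _ = b * (c * (d * (c * (e * (b * (d * c)))))) := congrArg (fun z => b * z) (congrArg (fun z => c * z) (congrArg (fun z => d * z) ((Cce' _).symm)))
      _ = b * (c * (d * (c * (b * (e * (d * c)))))) := congrArg (fun z => b * z) (congrArg (fun z => c * z) (congrArg (fun z => d * z) (congrArg (fun z => c * z) ((Cbe' _).symm))))
      _ = b * (d * (c * (d * (b * (e * (d * c)))))) := congrArg (fun z => b * z) (Bcd' _)
      _ = d * (b * (c * (d * (b * (e * (d * c)))))) := Cbd' _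
      _ = d * (b * (c * (b * (d * (e * (d * c)))))) := congrArg (fun z => d * z) (congrArg (fun z => b * z) (congrArg (fun z => c * z) ((Cbd' _).symm)))
      _ = d * (c * (b * (c * (d * (e * (d * c)))))) := congrArg (fun z => d * z) (Bbc' _)
      _ = d * (c * (b * (c * (e * (d * (e * c)))))) := congrArg (fun z => d * z) (congrArg (fun z => c * z) (congrArg (fun z => b * z) (congrArg (fun z => c * z) (Bde' _))))
      _ = d * (c * (b * (e * (c * (d * (e * c)))))) := congrArg (fun z => d * z) (congrArg (fun z => c * z) (congrArg (fun z => b * z) (Cce' _)))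
      _ = d * (c * (e * (b * (c * (d * (e * c)))))) := congrArg (fun z => d * z) (congrArg (fun z => c * z) (Cbe' _))
      _ = d * (c * (e * (b * (c * (d * (c * e)))))) := congrArg (fun z => d * z) (congrArg (fun z => c * z) (congrArg (fun z => e * z) (congrArg (fun z => b * z) (congrArg (fun z => c * z) (congrArg (fun z => d * z) ((Cce).symm))))))
      _ = d * (c * (e * (b * (d * (c * (d * e)))))) := congrArg (fun z => d * z) (congrArg (fun z => c * z) (congrArg (fun z => e * z) (congrArg (fun z => b * z) (Bcd' _))))
      _ = d * (c * (e * (d * (b * (c * (d * e)))))) := congrArg (fun z => d * z) (congrArg (fun z => c * z) (congrArg (fun z => e * z) (Cbd' _)))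

  rw [hbr2, hbs2, hbs1]
  have Hv2 : (b * (c * (d * e))) * (c * (b * (d * c))) =
      (d * (c * (e * d))) * (b * (c * (d * e))) :=
    calc (b * (c * (d * e))) * (c * (b * (d * c)))
        = b * (c * (d * (e * (c * (b * (d * c)))))) := by group
      _ = d * (c * (e * (d * (b * (c * (d * e)))))) := Hv
      _ = (d * (c * (e * d))) * (b * (c * (d * e))) := by group
  have Hw2 : (d * (c * (b * a))) * (c * (b * (d * c))) =
      (b * (a * (c * b))) * (d * (c * (b * a))) :=
    calc (d * (c * (b * a))) * (c * (b * (d * c)))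
        = d * (c * (b * (a * (c * (b * (d * c)))))) := by group
      _ = b * (a * (c * (b * (d * (c * (b * a)))))) := Hw
      _ = (b * (a * (c * b))) * (d * (c * (b * a))) := by group
  have hS2 : d * (c * (e * d)) =
      (b * (c * (d * e))) * (c * (b * (d * c))) * (b * (c * (d * e)))⁻¹ := by
    rw [Hv2, mul_inv_cancel_right]
  have hS1 : b * (a * (c * b)) =
      (d * (c * (b * a))) * (c * (b * (d * c))) * (d * (c * (b * a)))⁻¹ := by
    rw [Hw2, mul_inv_cancel_right]
  rw [hS2, hS1]
  group
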